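/- Let q be a prime power, 𝔽_q the field with q elements, A := 𝔽_q[X,X⁻¹], and let S := { [[X,0],[0,X⁻¹]], [[X⁻¹,0],[0,X]], [[1,1],[0,1]], [[1,−1],[0,1]], [[1,X],[0,1]], [[1,−X],[0,1]] } ⊆ SL₂(A). For P ∈ A write γ(P) := [[1,P],[0,1]]. Then for every n ∈ ℕ and every function a : {0,…,n} → {0,1} ⊆ 𝔽_q, the matrix γ(Σ_{i=0}^n a_i X^{2i}) is a product of a list of at most 3n+1 elements of S; moreover the map a ↦ γ(Σ_{i=0}^n a_i X^{2i}) is injective. Consequently, the set of elements of SL₂(A) expressible as products of at most 3n+1 elements of S has cardinality at least 2^{n+1}; in particular the subgroup generated by S has exponential growth. -/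

import Mathlib

/-!
Write `γ(P) = [[1, P], [0, 1]]` and `D = diag(X, X⁻¹)`. The map `γ` is additive and conjugation
by `D` multiplies the upper-right entry by `X²`, so the Horner step
`Σ_{i≤n} aᵢ X^{2i} = a₀ + X² · Σ_{i<n} a_{i+1} X^{2i}` gives
`γ(Σ_{i≤n} aᵢ X^{2i}) = γ(1)^{a₀} · D · γ(Σ_{i<n} a_{i+1} X^{2i}) · D⁻¹`,
which adds at most three letters per step. The coefficient of `X^{2i}` recovers `aᵢ`, so the
`2^(n+1)` sequences give distinct elements of the ball of radius `3n + 1`, which is finite because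
`S` is.
-/

open LaurentPolynomial
open scoped MatrixGroups

namespace Stmt15

def Sset (F : Type*) [Field F] : Set (SL(2, LaurentPolynomial F)) :=
  {M | (M : Matrix (Fin 2) (Fin 2) (LaurentPolynomial F)) ∈
    ({!![T 1, 0; 0, T (-1)], !![T (-1), 0; 0, T 1],
       !![1, 1; 0, 1], !![1, -1; 0, 1],
       !![1, T 1; 0, 1], !![1, -(T 1); 0, 1]} :
      Set (Matrix (Fin 2) (Fin 2) (LaurentPolynomial F)))}

section WordBall

variable {G : Type*} [Monoid G]

def wordBall (S : Set G) (k : ℕ) : Set G :=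
  {g | ∃ l : List G, (∀ x ∈ l, x ∈ S) ∧ l.length ≤ k ∧ l.prod = g}

variable {S : Set G}

lemma one_mem_wordBall (k : ℕ) : (1 : G) ∈ wordBall S k :=
  ⟨[], by simp, by simp, rfl⟩

lemma mem_wordBall_one {s : G} (hs : s ∈ S) : s ∈ wordBall S 1 :=
  ⟨[s], by simpa, by simp, by simp⟩

lemma mul_mem_wordBall {g h : G} {i j : ℕ} (hg : g ∈ wordBall S i) (hh : h ∈ wordBall S j) :
    g * h ∈ wordBall S (i + j) := by
  obtain ⟨l, hlS, hli, rfl⟩ := hg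
  obtain ⟨m, hmS, hmj, rfl⟩ := hh
  refine ⟨l ++ m, ?_, ?_, List.prod_append⟩
  · simpa only [List.mem_append, or_imp, forall_and] using ⟨hlS, hmS⟩
  · simp only [List.length_append]
    omega

lemma wordBall_finite (hS : S.Finite) (k : ℕ) : (wordBall S k).Finite := by
  have := hS.to_subtype
  refine ((List.finite_length_le S k).image fun l => (l.map (↑)).prod).subset ?_
  rintro g ⟨l, hlS, hlen, rfl⟩
  lift l to List S using hlS
  exact ⟨l, by simpa using hlen, rfl⟩

end WordBall

section SL2

variable {R : Type*} [CommRing R]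

def upperUnipotent (x : R) : SL(2, R) :=
  ⟨!![1, x; 0, 1], by simp [Matrix.det_fin_two_of]⟩

def diagUnit (u : Rˣ) : SL(2, R) :=
  ⟨!![(u : R), 0; 0, ↑u⁻¹], by simp [Matrix.det_fin_two_of]⟩

lemma upperUnipotent_zero : upperUnipotent (0 : R) = 1 :=
  Subtype.ext Matrix.one_fin_two.symm

lemma upperUnipotent_add (x y : R) :
    upperUnipotent (x + y) = upperUnipotent x * upperUnipotent y := by
  refine Subtype.ext ?_
  simp only [Matrix.SpecialLinearGroup.coe_mul]
  simp [upperUnipotent, add_comm]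

lemma upperUnipotent_injective : Function.Injective (upperUnipotent (R := R)) :=
  fun _ _ h => congrFun (congrFun (congrArg Subtype.val h) 0) 1

lemma diagUnit_mul_upperUnipotent_mul_diagUnit_inv (u : Rˣ) (x : R) :
    diagUnit u * upperUnipotent x * diagUnit u⁻¹ = upperUnipotent ((u : R) ^ 2 * x) := by
  refine Subtype.ext ?_
  simp only [Matrix.SpecialLinearGroup.coe_mul]
  simp [diagUnit, upperUnipotent]
  ring

end SL2

section EvenPowerSum

variable {R : Type*} [CommSemiring R] {n : ℕ}

noncomputable def evenPowerSum (a : Fin n → R) : R[T;T⁻¹] :=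
  ∑ i, C (a i) * T (2 * (i : ℤ))

lemma evenPowerSum_succ (a : Fin (n + 1) → R) :
    evenPowerSum a = C (a 0) + T 2 * evenPowerSum (Fin.tail a) := by
  simp only [evenPowerSum, Fin.sum_univ_succ, Finset.mul_sum, Fin.val_zero, Fin.val_succ,
    Fin.tail, Int.natCast_zero, mul_zero, T_zero, mul_one]
  congr 1
  refine Finset.sum_congr rfl fun i _ => ?_
  rw [mul_left_comm, ← T_add]
  congr 2
  push_cast
  ring

lemma coeff_evenPowerSum (a : Fin n → R) (j : Fin n) :
    (evenPowerSum a).coeff (2 * (j : ℤ)) = a j := by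
  simp only [evenPowerSum, AddMonoidAlgebra.coeff_sum, ← single_eq_C_mul_T,
    AddMonoidAlgebra.coeff_single, Finsupp.finsetSum_apply]
  simp [Finsupp.single_apply, Fin.val_inj]

lemma evenPowerSum_injective : Function.Injective (evenPowerSum (R := R) (n := n)) :=
  fun a b h => funext fun j => by rw [← coeff_evenPowerSum a j, h, coeff_evenPowerSum]

end EvenPowerSum

noncomputable def unitT {R : Type*} [Semiring R] (n : ℤ) : R[T;T⁻¹]ˣ := unitOfInvertible (T n)

section Generators

variable {F : Type*} [Field F]

lemma Sset_finite : (Sset F).Finite :=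
  (Set.toFinite _).preimage Subtype.val_injective.injOn

lemma diagUnit_unitT_one_mem : diagUnit (unitT 1) ∈ Sset F := Or.inl rfl

lemma diagUnit_unitT_one_inv_mem : diagUnit (unitT 1)⁻¹ ∈ Sset F := Or.inr (Or.inl rfl)

lemma upperUnipotent_one_mem : upperUnipotent 1 ∈ Sset F := Or.inr (Or.inr (Or.inl rfl))

lemma upperUnipotent_C_mem_wordBall_one {c : F} (hc : c = 0 ∨ c = 1) :
    upperUnipotent (C c) ∈ wordBall (Sset F) 1 := by
  rcases hc with rfl | rfl
  · simpa [upperUnipotent_zero] using one_mem_wordBall 1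
  · simpa using mem_wordBall_one upperUnipotent_one_mem

lemma upperUnipotent_evenPowerSum_mem_wordBall {n : ℕ} (a : Fin (n + 1) → F)
    (ha : ∀ i, a i = 0 ∨ a i = 1) :
    upperUnipotent (evenPowerSum a) ∈ wordBall (Sset F) (3 * n + 1) := by
  induction n with
  | zero => simpa [evenPowerSum] using upperUnipotent_C_mem_wordBall_one (ha 0)
  | succ m ih =>
    have hconj := mul_mem_wordBall (mul_mem_wordBall (mem_wordBall_one diagUnit_unitT_one_mem)
      (ih (Fin.tail a) fun i => ha i.succ)) (mem_wordBall_one diagUnit_unitT_one_inv_mem)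
    have hT2 : ((unitT 1 : (LaurentPolynomial F)ˣ) : LaurentPolynomial F) ^ 2 = T 2 := by
      simp [unitT]
    rw [diagUnit_mul_upperUnipotent_mul_diagUnit_inv, hT2] at hconj
    rw [evenPowerSum_succ, upperUnipotent_add,
      show 3 * (m + 1) + 1 = 1 + (1 + (3 * m + 1) + 1) by ring]
    exact mul_mem_wordBall (upperUnipotent_C_mem_wordBall_one (ha 0)) hconj

lemma two_pow_le_ncard_wordBall (n : ℕ) :
    2 ^ (n + 1) ≤ (wordBall (Sset F) (3 * n + 1)).ncard := by
  let bit : Bool → F := fun b => if b then 1 else 0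
  have bit_injective : Function.Injective bit := by
    intro b c h
    cases b <;> cases c <;> simp_all [bit]
  calc 2 ^ (n + 1) = (Set.univ : Set (Fin (n + 1) → Bool)).ncard := by simp
    _ ≤ (wordBall (Sset F) (3 * n + 1)).ncard :=
      Set.ncard_le_ncard_of_injOn (fun b => upperUnipotent (evenPowerSum (bit ∘ b)))
        (fun b _ => upperUnipotent_evenPowerSum_mem_wordBall _ fun i => by
          cases b i <;> simp [bit])
        (upperUnipotent_injective.comp (evenPowerSum_injective.comp bit_injective.comp_left)).injOn
        (wordBall_finite Sset_finite _)

end Generators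

end Stmt15

theorem statement15 (F : Type*) [Field F] (n : ℕ) :
    (∀ a : Fin (n + 1) → F, (∀ i, a i = 0 ∨ a i = 1) →
      ∃ l : List (SL(2, LaurentPolynomial F)),
        (∀ x ∈ l, x ∈ Stmt15.Sset F) ∧ l.length ≤ 3 * n + 1 ∧
          (l.prod : Matrix (Fin 2) (Fin 2) (LaurentPolynomial F)) =
            !![1, ∑ i : Fin (n + 1), C (a i) * T (2 * (i : ℤ)); 0, 1]) ∧
    (∀ a b : Fin (n + 1) → F, (∀ i, a i = 0 ∨ a i = 1) → (∀ i, b i = 0 ∨ b i = 1) →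
      (∑ i : Fin (n + 1), C (a i) * T (2 * (i : ℤ))) =
        (∑ i : Fin (n + 1), C (b i) * T (2 * (i : ℤ))) → a = b) ∧
    2 ^ (n + 1) ≤
      {M : SL(2, LaurentPolynomial F) |
        ∃ l : List (SL(2, LaurentPolynomial F)),
          (∀ x ∈ l, x ∈ Stmt15.Sset F) ∧ l.length ≤ 3 * n + 1 ∧ l.prod = M}.ncard := by
  refine ⟨fun a ha => ?_, fun a b _ _ h => Stmt15.evenPowerSum_injective h,
    Stmt15.two_pow_le_ncard_wordBall n⟩
  obtain ⟨l, hlS, hlen, hprod⟩ := Stmt15.upperUnipotent_evenPowerSum_mem_wordBall a ha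
  exact ⟨l, hlS, hlen, congrArg Subtype.val hprod⟩
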